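/- For D_{k,n} with k ≥ 1 and n ≥ 6, π₃(D_{k,n}) ≤ ⌊(2n+3k)/4⌋; that is, there exist three distinct vertices x, y, z such that the maximum number of internally disjoint {x,y,z}-paths is at most ⌊(2n+3k)/4⌋. -/

import Mathlib

open SimpleGraph

/-- A Steiner `S`-path in `G`: a path whose vertex set contains `S`. -/
structure SteinerPath {V : Type*} (G : SimpleGraph V) (S : Set V) where
  first : V
  last : V
  walk : G.Walk first last
  isPath : walk.IsPath
  contains : ∀ s ∈ S, s ∈ walk.support

/-- A family of internally disjoint `S`-paths: any two intersect exactly in `S`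
and share no edges. -/
def IDFamily {V : Type*} (G : SimpleGraph V) (S : Set V) {t : ℕ}
    (P : Fin t → SteinerPath G S) : Prop :=
  ∀ i j, i ≠ j →
    ({v | v ∈ (P i).walk.support} ∩ {v | v ∈ (P j).walk.support} = S) ∧
    (∀ e ∈ (P i).walk.edges, e ∉ (P j).walk.edges)

/-- The maximum number of internally disjoint `S`-paths in `G`. -/
noncomputable def steinerPathNumber {V : Type*} (G : SimpleGraph V) (S : Set V) : ℕ :=
  sSup {t | ∃ P : Fin t → SteinerPath G S, IDFamily G S P}

/-- The `r`-path connectivity of `G`. -/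
noncomputable def pathConnectivity {V : Type*} (G : SimpleGraph V) (r : ℕ) : ℕ :=
  sInf {m | ∃ S : Finset V, S.card = r ∧ steinerPathNumber G (↑S) = m}
/-- Number of vertices of `D_{k,n}`. -/
def dcellT (n : ℕ) : ℕ → ℕ
  | 0 => n
  | k+1 => dcellT n k * (dcellT n k + 1)

/-- Vertex set of `D_{k,n}`. -/
def DCellVtx (n : ℕ) : ℕ → Type
  | 0 => Fin n
  | k+1 => Fin (dcellT n k + 1) × DCellVtx n k

/-- The uid of a vertex of `D_{k,n}`. -/
def dcellUid (n : ℕ) : (k : ℕ) → DCellVtx n k → ℕ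
  | 0, a => a.val
  | k+1, a => dcellUid n k a.2 + a.1.val * dcellT n k

/-- Adjacency in `D_{k,n}`: inside a common copy of `D_{k-1,n}` use the recursive rule;
between two copies use the DCell connection rule. -/
def dcellAdj (n : ℕ) : (k : ℕ) → DCellVtx n k → DCellVtx n k → Prop
  | 0, a, b => a ≠ b
  | k+1, a, b =>
      (a.1 = b.1 ∧ dcellAdj n k a.2 b.2) ∨
      (a.1.val < b.1.val ∧ a.1.val = dcellUid n k b.2 ∧ b.1.val = dcellUid n k a.2 + 1) ∨
      (b.1.val < a.1.val ∧ b.1.val = dcellUid n k a.2 ∧ a.1.val = dcellUid n k b.2 + 1)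

/-- The `k`-dimensional data center network with `n`-port switches. -/
def DCell (n k : ℕ) : SimpleGraph (DCellVtx n k) where
  Adj := dcellAdj n k
  symm := by
    constructor
    induction k with
    | zero => intro a b h; exact h.symm
    | succ k ih =>
      rintro a b (⟨h1, h2⟩ | ⟨h1, h2, h3⟩ | ⟨h1, h2, h3⟩)
      · exact Or.inl ⟨h1.symm, ih _ _ h2⟩
      · exact Or.inr (Or.inr ⟨h1, h2, h3⟩)
      · exact Or.inr (Or.inl ⟨h1, h2, h3⟩)
  loopless := by
    constructor
    induction k with
    | zero => intro a h; exact h rfl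
    | succ k ih =>
      rintro a (⟨h1, h2⟩ | ⟨h1, h2, h3⟩ | ⟨h1, h2, h3⟩)
      · exact ih a.2 h2
      · omega
      · omega

/-- Two vertices of `D_{k,n}` lie in a common copy of `K_n` (level-0 cell) iff all
coordinates except the last agree. -/
def dcellSameCell (n : ℕ) : (k : ℕ) → DCellVtx n k → DCellVtx n k → Prop
  | 0, _, _ => True
  | k+1, a, b => a.1 = b.1 ∧ dcellSameCell n k a.2 b.2

/-!
Take three vertices `x, y, z` of a copy of `K_n`; the other `n - 3` vertices of that copy are
common neighbours of all three. Every `{x, y, z}`-path uses at least four edge-ends at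
`{x, y, z}`: each of the three vertices lies on an edge of the path, and at most two of them are
ends of the path. Distinct paths share no edges. A common neighbour `w` lies on at most one path,
which contains at most two edges at `w`, so one of `xw`, `yw`, `zw` is used by no path. Summing
over `x, y, z`, whose degrees are below `n + k`, gives `4 t + (n - 3) ≤ 3 (n + k - 1)`.
-/

open scoped Finset

namespace SimpleGraph.Walk

variable {V : Type*} [DecidableEq V] {G : SimpleGraph V}

def incidenceCount {u v : V} (p : G.Walk u v) (w : V) : ℕ :=
  p.edges.countP (w ∈ ·)

@[simp]
lemma incidenceCount_cons {u c v : V} (h : G.Adj u c) (q : G.Walk c v) (w : V) :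
    (cons h q).incidenceCount w = q.incidenceCount w + if w ∈ s(u, c) then 1 else 0 := by
  simp [incidenceCount, List.countP_cons]

lemma incidenceCount_eq_zero {u v w : V} {p : G.Walk u v} (hw : w ∉ p.support) :
    p.incidenceCount w = 0 :=
  List.countP_eq_zero.mpr fun _ he hwe => hw (p.mem_support_of_mem_edges he (by simpa using hwe))

lemma one_le_incidenceCount {u v w : V} {p : G.Walk u v} (hp : ¬p.Nil) (hw : w ∈ p.support) :
    1 ≤ p.incidenceCount w := by
  obtain ⟨e, he, hwe⟩ := (mem_support_iff_exists_mem_edges_of_not_nil hp).mp hw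
  exact List.countP_pos_iff.mpr ⟨e, he, by simpa using hwe⟩

lemma two_le_incidenceCount {u v w : V} {p : G.Walk u v} (hw : w ∈ p.support) (hwu : w ≠ u)
    (hwv : w ≠ v) : 2 ≤ p.incidenceCount w := by
  induction p with
  | nil => exact absurd (by simpa using hw) hwu
  | @cons a c b h q ih =>
    rw [support_cons, List.mem_cons] at hw
    rw [incidenceCount_cons]
    rcases hw with rfl | hw
    · exact absurd rfl hwu
    by_cases hc : w = c
    · subst hc
      have := one_le_incidenceCount (not_nil_of_ne hwv) q.start_mem_support
      rw [if_pos (Sym2.mem_mk_right _ _)]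
      omega
    · have := ih hw hc hwv; omega

lemma IsPath.incidenceCount_start_le_one {u v : V} {p : G.Walk u v} (hp : p.IsPath) :
    p.incidenceCount u ≤ 1 := by
  cases p with
  | nil => simp [incidenceCount]
  | cons h q =>
    rw [incidenceCount_cons, incidenceCount_eq_zero (cons_isPath_iff h q |>.mp hp).2]
    split <;> omega

lemma IsPath.incidenceCount_le_two {u v : V} {p : G.Walk u v} (hp : p.IsPath) (w : V) :
    p.incidenceCount w ≤ 2 := by
  induction p with
  | nil => simp [incidenceCount]
  | @cons a c b h q ih =>
    obtain ⟨hq, ha⟩ := (cons_isPath_iff h q).mp hp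
    rw [incidenceCount_cons]
    by_cases hc : w = c
    · subst hc
      have := hq.incidenceCount_start_le_one
      split <;> omega
    by_cases hwa : w = a
    · subst hwa
      rw [incidenceCount_eq_zero ha]
      split <;> omega
    · rw [if_neg (by rw [Sym2.mem_iff]; tauto)]
      exact ih hq

lemma IsTrail.card_filter_edges_toFinset {u v : V} {p : G.Walk u v} (hp : p.IsTrail) (w : V) :
    #{e ∈ p.edges.toFinset | w ∈ e} = p.incidenceCount w := by
  have : {e ∈ p.edges.toFinset | w ∈ e} = (p.edges.filter (w ∈ ·)).toFinset := by ext; simp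
  rw [this, List.toFinset_card_of_nodup (hp.edges_nodup.filter _), incidenceCount,
    List.countP_eq_length_filter]

end SimpleGraph.Walk

namespace SteinerPath

variable {V : Type*} {G : SimpleGraph V} {S : Set V}

lemma first_ne_last {x y : V} (hx : x ∈ S) (hy : y ∈ S) (hxy : x ≠ y) (p : SteinerPath G S) :
    p.first ≠ p.last := by
  obtain ⟨a, b, q, hq, hS⟩ := p
  intro h
  dsimp only at h
  subst h
  obtain rfl := Walk.eq_nil_iff_nil.mpr (Walk.isPath_iff_nil.mp hq)
  have := hS x hx
  have := hS y hy
  simp_all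

lemma four_le_incidenceCount [DecidableEq V] {x y z : V} (hxy : x ≠ y) (hxz : x ≠ z)
    (hyz : y ≠ z) (p : SteinerPath G {x, y, z}) :
    4 ≤ p.walk.incidenceCount x + p.walk.incidenceCount y + p.walk.incidenceCount z := by
  have hmem : ∀ w ∈ ({x, y, z} : Set V), w ∈ p.walk.support := p.contains
  have hnil : ¬p.walk.Nil :=
    Walk.not_nil_of_ne (p.first_ne_last (S := {x, y, z}) (by simp) (by simp) hxy)
  have hone : ∀ w ∈ ({x, y, z} : Set V), 1 ≤ p.walk.incidenceCount w :=
    fun w hw => Walk.one_le_incidenceCount hnil (hmem w hw)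
  have htwo : ∀ w ∈ ({x, y, z} : Set V), w ≠ p.first → w ≠ p.last →
      2 ≤ p.walk.incidenceCount w :=
    fun w hw => Walk.two_le_incidenceCount (hmem w hw)
  have hx := hone x (by simp)
  have hy := hone y (by simp)
  have hz := hone z (by simp)
  -- a path has only two ends, so one of `x`, `y`, `z` is an inner vertex
  by_cases hxe : x ≠ p.first ∧ x ≠ p.last
  · have := htwo x (by simp) hxe.1 hxe.2; omega
  by_cases hye : y ≠ p.first ∧ y ≠ p.last
  · have := htwo y (by simp) hye.1 hye.2; omega
  have hze : z ≠ p.first ∧ z ≠ p.last := by grind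
  have := htwo z (by simp) hze.1 hze.2; omega

end SteinerPath

namespace SimpleGraph

variable {V : Type*} {G : SimpleGraph V} {S : Set V} {t : ℕ}

lemma IDFamily.eq_of_mem_support {P : Fin t → SteinerPath G S} (hP : IDFamily G S P) {w : V}
    (hw : w ∉ S) {i j : Fin t} (hi : w ∈ (P i).walk.support) (hj : w ∈ (P j).walk.support) :
    i = j := by
  by_contra hij
  exact hw ((hP i j hij).1 ▸ ⟨hi, hj⟩)

variable [DecidableEq V]

lemma card_add_card_filter_notMem_le_degree {v : V} [Fintype (G.neighborSet v)]
    {B : Finset (Sym2 V)} (hB : B ⊆ G.incidenceFinset v) {W : Finset V}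
    (hW : ∀ w ∈ W, G.Adj v w) : #B + #{w ∈ W | s(v, w) ∉ B} ≤ G.degree v := by
  set U := {w ∈ W | s(v, w) ∉ B}
  have hinj : Function.Injective fun w => s(v, w) := fun _ _ => Sym2.congr_right.mp
  have hdisj : Disjoint B (U.image fun w => s(v, w)) := by
    simp only [Finset.disjoint_right, Finset.mem_image, Finset.mem_filter, U]
    rintro _ ⟨w, ⟨-, hw⟩, rfl⟩
    exact hw
  have hsub : B ∪ U.image (fun w => s(v, w)) ⊆ G.incidenceFinset v := by
    refine Finset.union_subset hB fun e he => ?_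
    obtain ⟨w, hw, rfl⟩ := Finset.mem_image.mp he
    exact (G.mem_incidenceFinset _ _).mpr
      (G.mk'_mem_incidenceSet_left_iff.mpr (hW w (Finset.mem_filter.mp hw).1))
  calc #B + #U = #(B ∪ U.image fun w => s(v, w)) := by
        rw [Finset.card_union_of_disjoint hdisj, Finset.card_image_of_injective _ hinj]
    _ ≤ #(G.incidenceFinset v) := Finset.card_le_card hsub
    _ = G.degree v := G.card_incidenceFinset_eq_degree v

def usedEdgesAt (P : Fin t → SteinerPath G S) (v : V) : Finset (Sym2 V) :=
  Finset.univ.biUnion fun i => {e ∈ (P i).walk.edges.toFinset | v ∈ e}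

@[simp]
lemma mem_usedEdgesAt {P : Fin t → SteinerPath G S} {v : V} {e : Sym2 V} :
    e ∈ usedEdgesAt P v ↔ ∃ i, e ∈ (P i).walk.edges ∧ v ∈ e := by
  simp [usedEdgesAt]

lemma usedEdgesAt_subset_incidenceFinset (P : Fin t → SteinerPath G S) (v : V)
    [Fintype (G.neighborSet v)] : usedEdgesAt P v ⊆ G.incidenceFinset v := by
  intro e he
  obtain ⟨i, he, hv⟩ := mem_usedEdgesAt.mp he
  exact (G.mem_incidenceFinset _ _).mpr ⟨(P i).walk.edges_subset_edgeSet he, hv⟩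

namespace IDFamily

variable {P : Fin t → SteinerPath G S}

lemma card_usedEdgesAt (hP : IDFamily G S P) (v : V) :
    #(usedEdgesAt P v) = ∑ i, (P i).walk.incidenceCount v := by
  rw [usedEdgesAt, Finset.card_biUnion]
  · exact Finset.sum_congr rfl fun i _ => (P i).isPath.isTrail.card_filter_edges_toFinset v
  · intro i _ j _ hij
    simp only [Function.onFun, Finset.disjoint_left, Finset.mem_filter, List.mem_toFinset]
    exact fun e hi hj => (hP i j hij).2 e hi.1 hj.1

lemma exists_notMem_usedEdgesAt (hP : IDFamily G S P) {x y z w : V} (hxy : x ≠ y)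
    (hxz : x ≠ z) (hyz : y ≠ z) (hw : w ∉ S) :
    s(x, w) ∉ usedEdgesAt P x ∨ s(y, w) ∉ usedEdgesAt P y ∨
      s(z, w) ∉ usedEdgesAt P z := by
  by_contra! h
  obtain ⟨⟨i, hxi, -⟩, ⟨j, hyj, -⟩, ⟨l, hzl, -⟩⟩ := h.imp mem_usedEdgesAt.mp
    (And.imp mem_usedEdgesAt.mp mem_usedEdgesAt.mp)
  have hwi := (P i).walk.snd_mem_support_of_mem_edges hxi
  obtain rfl := hP.eq_of_mem_support hw hwi ((P j).walk.snd_mem_support_of_mem_edges hyj)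
  obtain rfl := hP.eq_of_mem_support hw hwi ((P l).walk.snd_mem_support_of_mem_edges hzl)
  -- the three edges `xw`, `yw`, `zw` all lie on one path, but a path meets `w` at most twice
  have hsub : {s(x, w), s(y, w), s(z, w)} ⊆ {e ∈ (P i).walk.edges.toFinset | w ∈ e} := by
    simp [Finset.insert_subset_iff, hxi, hyj, hzl]
  have hcard := Finset.card_le_card hsub
  rw [Finset.card_eq_three.mpr ⟨_, _, _, mt Sym2.congr_left.mp hxy, mt Sym2.congr_left.mp hxz,
      mt Sym2.congr_left.mp hyz, rfl⟩, (P i).isPath.isTrail.card_filter_edges_toFinset] at hcard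
  have := (P i).isPath.incidenceCount_le_two w
  omega

end IDFamily

end SimpleGraph

namespace SimpleGraph.IDFamily

variable {V : Type*} [DecidableEq V] {G : SimpleGraph V} {x y z : V} {t : ℕ}
  {P : Fin t → SteinerPath G {x, y, z}}

lemma four_mul_le_card_usedEdgesAt (hP : IDFamily G {x, y, z} P) (hxy : x ≠ y) (hxz : x ≠ z)
    (hyz : y ≠ z) :
    4 * t ≤ #(usedEdgesAt P x) + #(usedEdgesAt P y) + #(usedEdgesAt P z) := by
  rw [hP.card_usedEdgesAt, hP.card_usedEdgesAt, hP.card_usedEdgesAt, ← Finset.sum_add_distrib,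
    ← Finset.sum_add_distrib]
  calc 4 * t = ∑ _ : Fin t, 4 := by simp [mul_comm]
    _ ≤ _ := Finset.sum_le_sum fun i _ => (P i).four_le_incidenceCount hxy hxz hyz

theorem four_mul_add_card_le_degree [G.LocallyFinite] (hP : IDFamily G {x, y, z} P)
    (hxy : x ≠ y) (hxz : x ≠ z) (hyz : y ≠ z) {W : Finset V}
    (hWS : ∀ w ∈ W, w ∉ ({x, y, z} : Set V))
    (hW : ∀ w ∈ W, G.Adj x w ∧ G.Adj y w ∧ G.Adj z w) :
    4 * t + #W ≤ G.degree x + G.degree y + G.degree z := by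
  have hcover : #W ≤ #{w ∈ W | s(x, w) ∉ usedEdgesAt P x} +
      #{w ∈ W | s(y, w) ∉ usedEdgesAt P y} + #{w ∈ W | s(z, w) ∉ usedEdgesAt P z} := by
    refine (Finset.card_le_card fun w hw => ?_).trans
      ((Finset.card_union_le _ _).trans (add_le_add_left (Finset.card_union_le _ _) _))
    simp only [Finset.mem_union, Finset.mem_filter]
    have := hP.exists_notMem_usedEdgesAt hxy hxz hyz (hWS w hw)
    tauto
  have hx := card_add_card_filter_notMem_le_degree (usedEdgesAt_subset_incidenceFinset P x)
    fun w hw => (hW w hw).1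
  have hy := card_add_card_filter_notMem_le_degree (usedEdgesAt_subset_incidenceFinset P y)
    fun w hw => (hW w hw).2.1
  have hz := card_add_card_filter_notMem_le_degree (usedEdgesAt_subset_incidenceFinset P z)
    fun w hw => (hW w hw).2.2
  have := hP.four_mul_le_card_usedEdgesAt hxy hxz hyz
  omega

end SimpleGraph.IDFamily

namespace SimpleGraph

variable {V : Type*} {G : SimpleGraph V}

lemma steinerPathNumber_le {S : Set V} {m : ℕ}
    (h : ∀ t (P : Fin t → SteinerPath G S), IDFamily G S P → t ≤ m) :
    steinerPathNumber G S ≤ m :=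
  csSup_le ⟨0, Fin.elim0, fun i => i.elim0⟩ fun t ⟨P, hP⟩ => h t P hP

lemma pathConnectivity_le_steinerPathNumber {S : Finset V} {r : ℕ} (hS : #S = r) :
    pathConnectivity G r ≤ steinerPathNumber G S :=
  Nat.sInf_le ⟨S, hS, rfl⟩

theorem IsNClique.four_mul_steinerPathNumber_add_le [G.LocallyFinite] {m : ℕ} {K : Finset V}
    (hK : G.IsNClique m K) {x y z : V} (hx : x ∈ K) (hy : y ∈ K) (hz : z ∈ K) (hxy : x ≠ y)
    (hxz : x ≠ z) (hyz : y ≠ z) :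
    4 * steinerPathNumber G {x, y, z} + (m - 3) ≤ G.degree x + G.degree y + G.degree z := by
  classical
  set W := K \ {x, y, z}
  have hW : #W = m - 3 := by
    rw [Finset.card_sdiff_of_subset (by simp [Finset.insert_subset_iff, hx, hy, hz]), hK.card_eq,
      Finset.card_eq_three.mpr ⟨x, y, z, hxy, hxz, hyz, rfl⟩]
  have hWS : ∀ w ∈ W, w ∉ ({x, y, z} : Set V) := by simp [W]
  have hWadj : ∀ w ∈ W, G.Adj x w ∧ G.Adj y w ∧ G.Adj z w := by
    intro w hw
    have hwS := hWS w hw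
    simp only [Set.mem_insert_iff, Set.mem_singleton_iff, not_or] at hwS
    have hwK := (Finset.mem_sdiff.mp hw).1
    exact ⟨hK.isClique hx hwK (Ne.symm hwS.1), hK.isClique hy hwK (Ne.symm hwS.2.1),
      hK.isClique hz hwK (Ne.symm hwS.2.2)⟩
  have hbound t (P : Fin t → SteinerPath G {x, y, z}) (hP : IDFamily G {x, y, z} P) :=
    hW ▸ hP.four_mul_add_card_le_degree hxy hxz hyz hWS hWadj
  have hempty := hbound 0 Fin.elim0 fun i => i.elim0
  have := steinerPathNumber_le (m := (G.degree x + G.degree y + G.degree z - (m - 3)) / 4)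
    fun t P hP => by have := hbound t P hP; omega
  omega

end SimpleGraph

instance DCellVtx.instFinite (n : ℕ) : (k : ℕ) → Finite (DCellVtx n k)
  | 0 => inferInstanceAs (Finite (Fin n))
  | k + 1 =>
    have := DCellVtx.instFinite n k
    inferInstanceAs (Finite (Fin (dcellT n k + 1) × DCellVtx n k))

noncomputable instance (n k : ℕ) : Fintype (DCellVtx n k) := Fintype.ofFinite _

noncomputable instance (n k : ℕ) : DecidableRel (DCell n k).Adj := Classical.decRel _

lemma dcellUid_lt (n : ℕ) : ∀ k (v : DCellVtx n k), dcellUid n k v < dcellT n k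
  | 0, v => v.isLt
  | k + 1, (i, u) => by
    have hu := dcellUid_lt n k u
    have hi : i.val * dcellT n k ≤ dcellT n k * dcellT n k :=
      Nat.mul_le_mul_right _ (Nat.lt_succ_iff.mp i.isLt)
    change dcellUid n k u + i.val * dcellT n k < dcellT n k * (dcellT n k + 1)
    rw [Nat.mul_succ]
    omega

-- `dcellUid` is a mixed-radix numeral whose lowest digit `dcellUid n k u` is below `dcellT n k`.
lemma dcellUid_injective (n : ℕ) : ∀ k, Function.Injective (dcellUid n k)
  | 0 => Fin.val_injective
  | k + 1 => by
    rintro ⟨i, u⟩ ⟨j, v⟩ h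
    change dcellUid n k u + i.val * dcellT n k = dcellUid n k v + j.val * dcellT n k at h
    have hu := dcellUid_lt n k u
    have hv := dcellUid_lt n k v
    have hpos : 0 < dcellT n k := by omega
    have hij : i.val = j.val := by
      simpa [Nat.add_mul_div_right _ _ hpos, Nat.div_eq_of_lt hu, Nat.div_eq_of_lt hv] using
        congrArg (· / dcellT n k) h
    rw [hij] at h
    exact Prod.ext (Fin.ext hij) (dcellUid_injective n k (Nat.add_right_cancel h))

namespace DCell

variable {n : ℕ}

lemma eq_of_adj_of_fst_ne {k : ℕ} {a b b' : DCellVtx n (k + 1)} (hb : (DCell n (k + 1)).Adj a b)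
    (hb' : (DCell n (k + 1)).Adj a b') (h : a.1 ≠ b.1) (h' : a.1 ≠ b'.1) : b = b' := by
  obtain ⟨hfst, huid⟩ : b.1.val = b'.1.val ∧ dcellUid n k b.2 = dcellUid n k b'.2 := by
    rcases hb with ⟨hab, -⟩ | hb | hb <;> rcases hb' with ⟨hab', -⟩ | hb' | hb'
    all_goals first | exact absurd hab h | exact absurd hab' h' | omega
  exact Prod.ext (Fin.ext hfst) (dcellUid_injective n k huid)

def copySucc (k : ℕ) (i : Fin (dcellT n k + 1)) : Copy (DCell n k) (DCell n (k + 1)) :=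
  Hom.toCopy ⟨Prod.mk i, fun h => Or.inl ⟨rfl, h⟩⟩ (Prod.mk_right_injective i)

theorem degree_lt : ∀ k (v : DCellVtx n k), (DCell n k).degree v < n + k
  | 0, v => by
    have hcard : Fintype.card (DCellVtx n 0) = n := by
      rw [Fintype.card_eq_nat_card]
      exact Nat.card_fin n
    simpa [hcard] using (DCell n 0).degree_lt_card_verts v
  | k + 1, v => by
    classical
    set cross : Finset (DCellVtx n (k + 1)) := {b | v.1 ≠ b.1 ∧ (DCell n (k + 1)).Adj v b}
    -- neighbours in the same copy of `D_{k,n}`, plus at most one neighbour outside it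
    have hsub : (DCell n (k + 1)).neighborFinset v ⊆
        ((DCell n k).neighborFinset v.2).map (copySucc k v.1).toEmbedding ∪ cross := by
      intro b hb
      rw [mem_neighborFinset] at hb
      by_cases hfst : v.1 = b.1
      · rcases hb with ⟨-, hb⟩ | ⟨hlt, -⟩ | ⟨hlt, -⟩
        · exact Finset.mem_union_left _ (Finset.mem_map.mpr
            ⟨b.2, (mem_neighborFinset _ _ _).mpr hb, Prod.ext hfst rfl⟩)
        all_goals simp [hfst] at hlt
      · exact Finset.mem_union_right _ (Finset.mem_filter.mpr ⟨Finset.mem_univ _, hfst, hb⟩)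
    have hcross : #cross ≤ 1 := Finset.card_le_one.mpr fun b hb b' hb' => by
      simp only [cross, Finset.mem_filter, Finset.mem_univ, true_and] at hb hb'
      exact eq_of_adj_of_fst_ne hb.2 hb'.2 hb.1 hb'.1
    have := degree_lt k v.2
    calc (DCell n (k + 1)).degree v = #((DCell n (k + 1)).neighborFinset v) :=
          (card_neighborFinset_eq_degree _ _).symm
      _ ≤ #(((DCell n k).neighborFinset v.2).map (copySucc k v.1).toEmbedding) + #cross :=
          (Finset.card_le_card hsub).trans (Finset.card_union_le _ _)
      _ ≤ (DCell n k).degree v.2 + 1 := by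
          rw [Finset.card_map, card_neighborFinset_eq_degree]
          omega
      _ < n + (k + 1) := by omega

def copyTop : (k : ℕ) → Copy (⊤ : SimpleGraph (Fin n)) (DCell n k)
  | 0 => Copy.id _
  | k + 1 => (copySucc k 0).comp (copyTop k)

end DCell

theorem stmt9_general (n k : ℕ) (hn : 6 ≤ n) :
    pathConnectivity (DCell n k) 3 ≤ (2 * n + 3 * k) / 4 ∧
    ∃ x y z : DCellVtx n k, x ≠ y ∧ x ≠ z ∧ y ≠ z ∧
      steinerPathNumber (DCell n k) {x, y, z} ≤ (2 * n + 3 * k) / 4 := by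
  classical
  have hK := isNClique_map_copy_top (DCell.copyTop (n := n) k)
  rw [Fintype.card_fin] at hK
  obtain ⟨x, hx, y, hy, z, hz, hxy, hxz, hyz⟩ :=
    Finset.two_lt_card.mp (by rw [hK.card_eq]; omega)
  have hbound : steinerPathNumber (DCell n k) {x, y, z} ≤ (2 * n + 3 * k) / 4 := by
    have := hK.four_mul_steinerPathNumber_add_le hx hy hz hxy hxz hyz
    have := DCell.degree_lt k x
    have := DCell.degree_lt k y
    have := DCell.degree_lt k z
    omega
  refine ⟨le_trans ?_ hbound, x, y, z, hxy, hxz, hyz, hbound⟩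
  simpa using pathConnectivity_le_steinerPathNumber (G := DCell n k)
    (Finset.card_eq_three.mpr ⟨x, y, z, hxy, hxz, hyz, rfl⟩)

/-- Upper bound: `π₃(D_{k,n}) ≤ ⌊(2n+3k)/4⌋` for `k ≥ 1`, `n ≥ 6`; witnessed by three
distinct vertices admitting at most that many internally disjoint Steiner paths. -/
theorem stmt9 (n k : ℕ) (hk : 1 ≤ k) (hn : 6 ≤ n) :
    pathConnectivity (DCell n k) 3 ≤ (2 * n + 3 * k) / 4 ∧
    ∃ x y z : DCellVtx n k, x ≠ y ∧ x ≠ z ∧ y ≠ z ∧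
      steinerPathNumber (DCell n k) {x, y, z} ≤ (2 * n + 3 * k) / 4 :=
  stmt9_general n k hn
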